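/- arXiv:1209.1424 — 2 statements merged into one kernel-verified Lean document; each statement's English description precedes it below -/
import Mathlib

section
/- Let $h_1,\dots,h_N$ be i.i.d. nonnegative random variables whose common CDF $F_h$ satisfies $\lim_{x\to\infty}\frac{1-F_h(x)}{\alpha x^{l}e^{-\beta x^{n}+H(x)}}=1$ for constants $\alpha,\beta,n>0$, $l\in\mathbb{R}$, and a slowly varying function $H$ with $H(x)=o(x^n)$. Let $h^\star_N=\max_i h_i$. Then $\frac{h^\star_N}{\left(\frac{1}{\beta}\log(\alpha N)\right)^{1/n}}\to 1$ in probability as $N\to\infty$. -/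
open MeasureTheory ProbabilityTheory Filter Real Set Topology

/-- The maximum of `Y 1, ..., Y N`. -/
noncomputable def maxOver {Ω : Type*} (Y : ℕ → Ω → ℝ) (N : ℕ) (ω : Ω) : ℝ :=
  sSup ((fun i => Y i ω) '' Set.Icc 1 N)

/-! With `c_N = (log (α N) / β) ^ (1 / n)`, the union bound gives
`P(h*_N > s c_N) ≤ N (1 - F(s c_N))` and independence gives
`P(h*_N ≤ s c_N) = F(s c_N) ^ N ≤ exp (-N (1 - F(s c_N)))`.
Since `β (s c_N) ^ n = s ^ n log (α N)` and the factors `x ^ l`, `e ^ H(x)` are `e ^ o(x ^ n)`,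
the tail asymptotics give `N (1 - F(s c_N)) = exp ((1 - s ^ n) log (α N) + o(log N))`.
This tends to `0` for `s > 1` and to `∞` for `s < 1`, so both probabilities vanish at
`s = 1 ± ε`. -/

open Asymptotics

noncomputable def weibullScale (β n t : ℝ) : ℝ := (t / β) ^ (1 / n)

section Asymptotics

variable {α β n l s : ℝ} {F H : ℝ → ℝ}

lemma weibullScale_pos (hβ : 0 < β) {t : ℝ} (ht : 0 < t) : 0 < weibullScale β n t := by
  unfold weibullScale; positivity

lemma mul_mul_weibullScale_rpow (hβ : 0 < β) (hn : 0 < n) (hs : 0 ≤ s) {t : ℝ}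
    (ht : 0 ≤ t) :
    β * (s * weibullScale β n t) ^ n = s ^ n * t := by
  rw [weibullScale, mul_rpow hs (by positivity), ← rpow_mul (by positivity),
    one_div_mul_cancel hn.ne', rpow_one]
  field_simp

lemma tendsto_weibullScale_atTop (hβ : 0 < β) (hn : 0 < n) :
    Tendsto (weibullScale β n) atTop atTop :=
  (tendsto_rpow_atTop (by positivity)).comp (tendsto_id.atTop_div_const hβ)

lemma isLittleO_log_add_comp_weibullScale (hβ : 0 < β) (hn : 0 < n) (hs : 0 < s)
    (hHo : H =o[atTop] fun x => x ^ n) :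
    (fun t => l * log (s * weibullScale β n t) + H (s * weibullScale β n t)) =o[atTop] id := by
  have hlog : (fun x => l * log x + H x) =o[atTop] fun x => x ^ n :=
    ((isLittleO_log_rpow_atTop hn).const_mul_left l).add hHo
  have hpow : (fun t => (s * weibullScale β n t) ^ n) =ᶠ[atTop] fun t => s ^ n / β * id t := by
    filter_upwards [eventually_ge_atTop 0] with t ht
    have := mul_mul_weibullScale_rpow hβ hn hs.le ht
    simp only [id]
    field_simp
    linarith
  exact (hlog.comp_tendsto ((tendsto_weibullScale_atTop hβ hn).const_mul_atTop hs)).trans_isBigO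
    (((isBigO_refl id atTop).const_mul_left _).congr' hpow.symm EventuallyEq.rfl)

lemma exp_mul_rpow_mul_exp_eq (hβ : 0 < β) (hn : 0 < n) (hs : 0 < s) {t : ℝ} (ht : 0 < t) :
    exp t * ((s * weibullScale β n t) ^ l *
      exp (-β * (s * weibullScale β n t) ^ n + H (s * weibullScale β n t)))
      = exp ((1 - s ^ n) * t +
          (l * log (s * weibullScale β n t) + H (s * weibullScale β n t))) := by
  have hx : 0 < s * weibullScale β n t := mul_pos hs (weibullScale_pos hβ ht)
  rw [rpow_def_of_pos hx, ← exp_add, ← exp_add, neg_mul,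
    mul_mul_weibullScale_rpow hβ hn hs.le ht.le]
  ring_nf

lemma tendsto_const_mul_add_atTop {R : ℝ → ℝ} {c : ℝ} (hc : 0 < c) (hR : R =o[atTop] id) :
    Tendsto (fun t => c * t + R t) atTop atTop := by
  have hdiv : Tendsto (fun t => c + R t / t) atTop (𝓝 c) := by
    simpa using tendsto_const_nhds.add hR.tendsto_div_nhds_zero
  refine (hdiv.pos_mul_atTop hc tendsto_id).congr' ?_
  filter_upwards [eventually_ne_atTop 0] with t ht
  simp only [id]
  field_simp

lemma tendsto_const_mul_add_atBot {R : ℝ → ℝ} {c : ℝ} (hc : c < 0) (hR : R =o[atTop] id) :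
    Tendsto (fun t => c * t + R t) atTop atBot := by
  refine (tendsto_neg_atTop_atBot.comp
    (tendsto_const_mul_add_atTop (neg_pos.2 hc) hR.neg_left)).congr fun t => ?_
  simp only [Function.comp_apply]
  ring

lemma exp_div_mul_tail_eventuallyEq (hβ : 0 < β) (hn : 0 < n) (hs : 0 < s) :
    (fun t => exp t / α * (1 - F (s * weibullScale β n t))) =ᶠ[atTop] fun t =>
      (1 - F (s * weibullScale β n t)) / (α * (s * weibullScale β n t) ^ l *
        exp (-β * (s * weibullScale β n t) ^ n + H (s * weibullScale β n t))) *
      exp ((1 - s ^ n) * t +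
        (l * log (s * weibullScale β n t) + H (s * weibullScale β n t))) := by
  filter_upwards [eventually_gt_atTop 0] with t ht
  have hxl : (s * weibullScale β n t) ^ l ≠ 0 :=
    (rpow_pos_of_pos (mul_pos hs (weibullScale_pos hβ ht)) l).ne'
  rw [← exp_mul_rpow_mul_exp_eq hβ hn hs ht]
  field_simp

lemma tendsto_exp_div_mul_tail_zero (hβ : 0 < β) (hn : 0 < n) (hs : 0 < s) (hsn : 1 < s ^ n)
    (hHo : H =o[atTop] fun x => x ^ n)
    (htail : Tendsto (fun x => (1 - F x) / (α * x ^ l * exp (-β * x ^ n + H x))) atTop (𝓝 1)) :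
    Tendsto (fun t => exp t / α * (1 - F (s * weibullScale β n t))) atTop (𝓝 0) := by
  have hexp := tendsto_exp_atBot.comp <| tendsto_const_mul_add_atBot (sub_neg.2 hsn)
    (isLittleO_log_add_comp_weibullScale (l := l) hβ hn hs hHo)
  have hratio := htail.comp ((tendsto_weibullScale_atTop hβ hn).const_mul_atTop hs)
  simpa using (hratio.mul hexp).congr' (exp_div_mul_tail_eventuallyEq hβ hn hs).symm

lemma tendsto_exp_div_mul_tail_atTop (hβ : 0 < β) (hn : 0 < n) (hs : 0 < s) (hsn : s ^ n < 1)
    (hHo : H =o[atTop] fun x => x ^ n)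
    (htail : Tendsto (fun x => (1 - F x) / (α * x ^ l * exp (-β * x ^ n + H x))) atTop (𝓝 1)) :
    Tendsto (fun t => exp t / α * (1 - F (s * weibullScale β n t))) atTop atTop := by
  have hexp := tendsto_exp_atTop.comp <| tendsto_const_mul_add_atTop (sub_pos.2 hsn)
    (isLittleO_log_add_comp_weibullScale (l := l) hβ hn hs hHo)
  have hratio := htail.comp ((tendsto_weibullScale_atTop hβ hn).const_mul_atTop hs)
  exact (hratio.pos_mul_atTop one_pos hexp).congr' (exp_div_mul_tail_eventuallyEq hβ hn hs).symm

end Asymptotics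

lemma Filter.Tendsto.natCast_mul_comp_log_const_mul {α : ℝ} {f : ℝ → ℝ} {l : Filter ℝ}
    (hα : 0 < α)
    (hf : Tendsto (fun t => Real.exp t / α * f t) atTop l) :
    Tendsto (fun N : ℕ => N * f (Real.log (α * N))) atTop l := by
  refine (hf.comp (tendsto_log_atTop.comp
    (tendsto_natCast_atTop_atTop.const_mul_atTop hα))).congr' ?_
  filter_upwards [eventually_gt_atTop 0] with N hN
  simp only [Function.comp_apply]
  rw [Real.exp_log (by positivity)]
  field_simp

lemma pow_le_exp_neg_mul_one_sub {p : ℝ} (hp : 0 ≤ p) (N : ℕ) :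
    p ^ N ≤ exp (-(N * (1 - p))) := by
  calc p ^ N ≤ exp (-(1 - p)) ^ N := by
        gcongr
        simpa using one_sub_le_exp_neg (1 - p)
    _ = exp (-(N * (1 - p))) := by rw [← exp_nat_mul, mul_neg]

lemma lt_or_le_of_lt_abs_div_sub_one {m c δ ε : ℝ} (hc : 0 < c) (hεδ : ε ≤ δ)
    (h : δ < |m / c - 1|) : (1 + ε) * c < m ∨ m ≤ (1 - ε) * c := by
  rcases lt_abs.mp (hεδ.trans_lt h) with hgt | hlt
  · left
    rw [← lt_div_iff₀ hc]
    linarith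
  · right
    rw [← div_le_iff₀ hc]
    linarith

section MaxOver

variable {Ω : Type*} {Y : ℕ → Ω → ℝ} {N : ℕ}

lemma maxOver_le_iff (hN : 1 ≤ N) {ω : Ω} {x : ℝ} :
    maxOver Y N ω ≤ x ↔ ∀ i ∈ Finset.Icc 1 N, Y i ω ≤ x := by
  rw [maxOver, csSup_le_iff ((Set.finite_Icc 1 N).image _).bddAbove
    ((Set.nonempty_Icc.2 hN).image _), Set.forall_mem_image]
  simp only [Set.mem_Icc, Finset.mem_Icc]

lemma setOf_maxOver_le_eq (hN : 1 ≤ N) (x : ℝ) :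
    {ω | maxOver Y N ω ≤ x} = ⋂ i ∈ Finset.Icc 1 N, {ω | Y i ω ≤ x} := by
  ext ω
  simp only [Set.mem_ofPred_eq, Set.mem_iInter, maxOver_le_iff hN]

lemma setOf_lt_maxOver_eq (hN : 1 ≤ N) (x : ℝ) :
    {ω | x < maxOver Y N ω} = ⋃ i ∈ Finset.Icc 1 N, {ω | x < Y i ω} := by
  ext ω
  simp only [Set.mem_ofPred_eq, Set.mem_iUnion, exists_prop]
  rw [← not_le, maxOver_le_iff hN]
  push Not
  rfl

variable [MeasurableSpace Ω] {μ : Measure Ω} {F : ℝ → ℝ}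

lemma measureReal_maxOver_le_eq (hindep : iIndepFun Y μ)
    (hcdf : ∀ i x, μ.real {ω | Y i ω ≤ x} = F x) (hN : 1 ≤ N) (x : ℝ) :
    μ.real {ω | maxOver Y N ω ≤ x} = F x ^ N := by
  have hprod : μ (⋂ i ∈ Finset.Icc 1 N, {ω | Y i ω ≤ x})
      = ∏ i ∈ Finset.Icc 1 N, μ {ω | Y i ω ≤ x} :=
    hindep.meas_biInter fun i _ => ⟨Set.Iic x, measurableSet_Iic, rfl⟩
  rw [setOf_maxOver_le_eq hN, measureReal_def, hprod, ENNReal.toReal_prod]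
  simp [← measureReal_def, hcdf]

variable [IsProbabilityMeasure μ]

lemma measureReal_lt_maxOver_le (hmeas : ∀ i, Measurable (Y i))
    (hcdf : ∀ i x, μ.real {ω | Y i ω ≤ x} = F x) (hN : 1 ≤ N) (x : ℝ) :
    μ.real {ω | x < maxOver Y N ω} ≤ N * (1 - F x) := by
  have htail : ∀ i, μ.real {ω | x < Y i ω} = 1 - F x := fun i => by
    rw [← hcdf i x, ← probReal_compl_eq_one_sub (measurableSet_le (hmeas i) measurable_const)]
    simp only [Set.compl_ofPred, not_le]
  calc μ.real {ω | x < maxOver Y N ω}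
      ≤ ∑ i ∈ Finset.Icc 1 N, μ.real {ω | x < Y i ω} := by
        rw [setOf_lt_maxOver_eq hN]
        exact measureReal_biUnion_finset_le _ _
    _ = N * (1 - F x) := by
        simp only [htail, Finset.sum_const, Nat.card_Icc, add_tsub_cancel_right, nsmul_eq_mul]

end MaxOver

theorem normalized_max_tendsto_one_in_probability_general
    {Ω : Type*} [MeasurableSpace Ω] (μ : Measure Ω) [IsProbabilityMeasure μ]
    (h : ℕ → Ω → ℝ) (hmeas : ∀ i, Measurable (h i))
    (hindep : iIndepFun h μ)
    (F : ℝ → ℝ) (hcdf : ∀ i x, (μ {ω | h i ω ≤ x}).toReal = F x)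
    (α β n l : ℝ) (hα : 0 < α) (hβ : 0 < β) (hn : 0 < n)
    (H : ℝ → ℝ)
    (hHo : H =o[atTop] fun x => x ^ n)
    (htail : Tendsto
      (fun x => (1 - F x) / (α * x ^ l * Real.exp (-β * x ^ n + H x)))
      atTop (𝓝 1)) :
    ∀ δ > (0 : ℝ), Tendsto (fun N : ℕ =>
      (μ {ω | δ < |maxOver h N ω / ((Real.log (α * N) / β) ^ (1 / n)) - 1|}).toReal)
      atTop (𝓝 0) := by
  intro δ hδ
  set ε := min δ (1 / 2)
  have hε : 0 < ε := lt_min hδ one_half_pos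
  have hε1 : ε < 1 := (min_le_right _ _).trans_lt one_half_lt_one
  have hF0 (x : ℝ) : 0 ≤ F x := hcdf 0 x ▸ ENNReal.toReal_nonneg
  have hupper := (tendsto_exp_div_mul_tail_zero (s := 1 + ε) hβ hn (by linarith)
    (one_lt_rpow (by linarith) hn) hHo htail).natCast_mul_comp_log_const_mul hα
  have hlower := tendsto_exp_atBot.comp <| tendsto_neg_atTop_atBot.comp <|
    (tendsto_exp_div_mul_tail_atTop (s := 1 - ε) hβ hn (by linarith)
      (rpow_lt_one (by linarith) (by linarith) hn) hHo htail).natCast_mul_comp_log_const_mul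
        hα
  refine squeeze_zero' (Eventually.of_forall fun N => ENNReal.toReal_nonneg) ?_
    (by simpa using hupper.add hlower)
  filter_upwards [eventually_ge_atTop 1, (tendsto_log_atTop.comp
    (tendsto_natCast_atTop_atTop.const_mul_atTop hα)).eventually_gt_atTop 0] with N hN hL
  set c := weibullScale β n (log (α * N))
  calc μ.real {ω | δ < |maxOver h N ω / c - 1|}
      ≤ μ.real ({ω | (1 + ε) * c < maxOver h N ω} ∪
          {ω | maxOver h N ω ≤ (1 - ε) * c}) :=
        measureReal_mono fun ω =>
          lt_or_le_of_lt_abs_div_sub_one (weibullScale_pos hβ hL) (min_le_left _ _)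
    _ ≤ μ.real {ω | (1 + ε) * c < maxOver h N ω} +
          μ.real {ω | maxOver h N ω ≤ (1 - ε) * c} :=
        measureReal_union_le _ _
    _ ≤ N * (1 - F ((1 + ε) * c)) + exp (-(N * (1 - F ((1 - ε) * c)))) :=
        add_le_add (measureReal_lt_maxOver_le hmeas hcdf hN _)
          ((measureReal_maxOver_le_eq hindep hcdf hN _).trans_le
            (pow_le_exp_neg_mul_one_sub (hF0 _) N))

/-- For i.i.d. nonnegative `h i` with double-exponentially decaying tail
`1 - F_h(x) ~ α x^l e^(-β x^n + H(x))`, the normalized maximum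
`h*_N / ((log(α N)/β)^(1/n))` converges to `1` in probability. -/
theorem normalized_max_tendsto_one_in_probability
    {Ω : Type*} [MeasurableSpace Ω] (μ : Measure Ω) [IsProbabilityMeasure μ]
    (h : ℕ → Ω → ℝ) (hmeas : ∀ i, Measurable (h i)) (hnn : ∀ i ω, 0 ≤ h i ω)
    (hindep : iIndepFun h μ)
    (F : ℝ → ℝ) (hcdf : ∀ i x, (μ {ω | h i ω ≤ x}).toReal = F x)
    (α β n l : ℝ) (hα : 0 < α) (hβ : 0 < β) (hn : 0 < n)
    (H : ℝ → ℝ)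
    (hslow : ∀ a > (0 : ℝ), Tendsto (fun x => H (a * x) / H x) atTop (𝓝 1))
    (hHo : H =o[atTop] fun x => x ^ n)
    (htail : Tendsto
      (fun x => (1 - F x) / (α * x ^ l * Real.exp (-β * x ^ n + H x)))
      atTop (𝓝 1)) :
    ∀ δ > (0 : ℝ), Tendsto (fun N : ℕ =>
      (μ {ω | δ < |maxOver h N ω / ((Real.log (α * N) / β) ^ (1 / n)) - 1|}).toReal)
      atTop (𝓝 0) :=
  normalized_max_tendsto_one_in_probability_general μ h hmeas hindep F hcdf α β n l hα hβ hn H hHo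
    htail
end

section
/- Let $X_1,\dots,X_N$ be i.i.d. nonnegative random variables with $\lim_{x\to\infty}\frac{1-F_X(x)}{\xi x^{-\gamma}}=1$ for constants $\xi,\gamma>0$. Let $X^\star_N=\max_i X_i$ and $\tilde{R}(N)=\mathbb{E}[\log(X^\star_N)\mathbf{1}\{X^\star_N\ge 1\}]$. Then $\lim_{N\to\infty}\frac{\tilde{R}(N)}{\frac{1}{\gamma}\log(\xi N)}=1$. -/
open MeasureTheory ProbabilityTheory Filter Real Set Topology

/-!
Writing `M = X*_N`, the layer-cake formula and independence turn the truncated mean of `log M`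
into `∫_{t > 0} P(M > e^t) dt = ∫_{t > 0} (1 - F(e^t)^N) dt`.
With `L = (1/γ) log(ξN)`, the integrand is at most `1` everywhere and at most
`N (1 - F(e^t)) ≈ N ξ e^{-γt}` beyond `t = (1+ε)L`, where the tail contributes
`O((ξN)^{-ε})`; on `(0, (1-ε)L]` it is at least `1 - exp(-N(1 - F(e^{(1-ε)L}))) ≥ 1 - exp(-(1-ε)(ξN)^ε)`.
So the integral lies between `(1 - o(1))(1-ε)L` and `(1+ε)L + o(1)`.
-/

open scoped ENNReal

section maxOver

variable {Ω : Type*} {X : ℕ → Ω → ℝ} {N : ℕ}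

lemma maxOver_eq_sup' (hN : 1 ≤ N) (ω : Ω) :
    maxOver X N ω = (Finset.Icc 1 N).sup' (Finset.nonempty_Icc.2 hN) fun i => X i ω := by
  rw [Finset.sup'_eq_csSup_image, Finset.coe_Icc]
  rfl

variable [MeasurableSpace Ω]

lemma measurable_maxOver (hX : ∀ i, Measurable (X i)) (hN : 1 ≤ N) :
    Measurable (maxOver X N) := by
  have : maxOver X N = (Finset.Icc 1 N).sup' (Finset.nonempty_Icc.2 hN) X := by
    funext ω
    rw [maxOver_eq_sup' hN, Finset.sup'_apply]
  exact this ▸ Finset.measurable_sup' _ fun i _ => hX i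

variable {μ : Measure Ω}

lemma measure_maxOver_le (hindep : iIndepFun X μ) {G : ℝ → ℝ≥0∞}
    (hcdf : ∀ i x, μ {ω | X i ω ≤ x} = G x) (hN : 1 ≤ N) (x : ℝ) :
    μ {ω | maxOver X N ω ≤ x} = G x ^ N := by
  have hset : {ω | maxOver X N ω ≤ x} = ⋂ i ∈ Finset.Icc 1 N, X i ⁻¹' Iic x := by
    ext ω
    simp only [mem_ofPred_eq, maxOver_eq_sup' hN, Finset.sup'_le_iff, mem_iInter, mem_preimage,
      mem_Iic]
  rw [hset, hindep.measure_inter_preimage_eq_mul _ fun i _ => measurableSet_Iic]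
  simp only [preimage, mem_Iic, hcdf, Finset.prod_const, Nat.card_Icc, add_tsub_cancel_right]

lemma measure_lt_maxOver [IsProbabilityMeasure μ] (hX : ∀ i, Measurable (X i))
    (hindep : iIndepFun X μ) {G : ℝ → ℝ≥0∞}
    (hcdf : ∀ i x, μ {ω | X i ω ≤ x} = G x) (hN : 1 ≤ N) (x : ℝ) :
    μ {ω | x < maxOver X N ω} = 1 - G x ^ N := by
  have hcompl : {ω | x < maxOver X N ω} = {ω | maxOver X N ω ≤ x}ᶜ := by
    ext ω
    simp [not_le]
  rw [hcompl, prob_compl_eq_one_sub (measurableSet_le (measurable_maxOver hX hN) measurable_const),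
    measure_maxOver_le hindep hcdf hN]

end maxOver

lemma lt_ite_log_iff {t y : ℝ} (ht : 0 < t) :
    t < (if 1 ≤ y then log y else 0) ↔ exp t < y := by
  split_ifs with hy
  · exact lt_log_iff_exp_lt (by linarith)
  · simp only [not_le] at hy
    exact iff_of_false ht.not_gt fun h => (one_lt_exp_iff.2 ht).not_gt (h.trans hy)

lemma integral_ite_log_eq_lintegral_measure_lt {Ω : Type*} [MeasurableSpace Ω] {μ : Measure Ω}
    {M : Ω → ℝ} (hM : Measurable M) :
    ∫ ω, (if 1 ≤ M ω then log (M ω) else 0) ∂μ =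
      (∫⁻ t in Ioi 0, μ {ω | exp t < M ω}).toReal := by
  have hnonneg : 0 ≤ᵐ[μ] fun ω => if 1 ≤ M ω then log (M ω) else 0 :=
    .of_forall fun ω => by
      dsimp only [Pi.zero_apply]
      split_ifs with h
      exacts [log_nonneg h, le_rfl]
  have hmeas : Measurable fun ω => if 1 ≤ M ω then log (M ω) else 0 :=
    Measurable.ite (measurableSet_le measurable_const hM) (measurable_log.comp hM) measurable_const
  rw [integral_eq_lintegral_of_nonneg_ae hnonneg hmeas.aestronglyMeasurable,
    lintegral_eq_lintegral_meas_lt μ hnonneg hmeas.aemeasurable]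
  congr 1
  refine setLIntegral_congr_fun measurableSet_Ioi fun t (ht : 0 < t) => ?_
  simp only [lt_ite_log_iff ht]

lemma eventually_le_mul_of_tendsto_div {α : Type*} {l : Filter α} {f g : α → ℝ}
    (h : Tendsto (fun t => f t / g t) l (𝓝 1)) (hg : ∀ᶠ t in l, 0 < g t) {r : ℝ}
    (hr : 1 < r) :
    ∀ᶠ t in l, f t ≤ r * g t := by
  filter_upwards [h.eventually (gt_mem_nhds hr), hg] with t ht hgt
  exact (div_le_iff₀ hgt).1 ht.le

lemma eventually_mul_le_of_tendsto_div {α : Type*} {l : Filter α} {f g : α → ℝ}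
    (h : Tendsto (fun t => f t / g t) l (𝓝 1)) (hg : ∀ᶠ t in l, 0 < g t) {r : ℝ}
    (hr : r < 1) :
    ∀ᶠ t in l, r * g t ≤ f t := by
  filter_upwards [h.eventually (lt_mem_nhds hr), hg] with t ht hgt
  exact (le_div_iff₀ hgt).1 ht.le

section TailIntegral

variable {F : ℝ → ℝ} {ξ γ : ℝ}

lemma lintegral_Ioi_ofReal_mul_exp_neg {K : ℝ} (hK : 0 ≤ K) (hγ : 0 < γ) (c : ℝ) :
    ∫⁻ t in Ioi c, ENNReal.ofReal (K * exp (-γ * t)) =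
      ENNReal.ofReal (K * exp (-γ * c) / γ) := by
  rw [← ofReal_integral_eq_lintegral_ofReal ((exp_neg_integrableOn_Ioi c hγ).const_mul K)
      (.of_forall fun t => by positivity), integral_const_mul,
    integral_exp_mul_Ioi (neg_neg_of_pos hγ)]
  congr 1
  field_simp

lemma lintegral_one_sub_pow_le (hF0 : ∀ x, 0 ≤ F x) {A c : ℝ} (hA : 0 ≤ A) (hγ : 0 < γ)
    (hc : 0 ≤ c) (htail : ∀ t, c < t → 1 - F (exp t) ≤ A * exp (-γ * t)) (N : ℕ) :
    ∫⁻ t in Ioi 0, ENNReal.ofReal (1 - F (exp t) ^ N) ≤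
      ENNReal.ofReal (c + N * A * exp (-γ * c) / γ) := by
  rw [← Ioc_union_Ioi_eq_Ioi hc, lintegral_union measurableSet_Ioi Ioc_disjoint_Ioi_same,
    ENNReal.ofReal_add hc (by positivity)]
  gcongr
  · calc ∫⁻ t in Ioc 0 c, ENNReal.ofReal (1 - F (exp t) ^ N)
        ≤ ∫⁻ _ in Ioc 0 c, 1 := setLIntegral_mono' measurableSet_Ioc fun t _ =>
          ENNReal.ofReal_le_one.2 (sub_le_self _ (pow_nonneg (hF0 _) N))
      _ = ENNReal.ofReal c := by simp
  · rw [← lintegral_Ioi_ofReal_mul_exp_neg (by positivity) hγ]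
    refine setLIntegral_mono' measurableSet_Ioi fun t (ht : c < t) => ?_
    gcongr
    -- Bernoulli: `1 - p ^ N ≤ N * (1 - p)` for `p ≥ 0`
    have := one_add_mul_sub_le_pow (by linarith [hF0 (exp t)] : -1 ≤ F (exp t)) N
    nlinarith [htail t ht]

lemma ofReal_mul_le_lintegral_one_sub_pow (hF0 : ∀ x, 0 ≤ F x) (hFmono : Monotone F) {c u : ℝ}
    (hc : 0 ≤ c) (hu : F (exp c) ≤ 1 - u) (N : ℕ) :
    ENNReal.ofReal ((1 - exp (-(N * u))) * c) ≤
      ∫⁻ t in Ioi 0, ENNReal.ofReal (1 - F (exp t) ^ N) := by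
  calc ENNReal.ofReal ((1 - exp (-(N * u))) * c)
      = ∫⁻ _ in Ioc 0 c, ENNReal.ofReal (1 - exp (-(N * u))) := by
        rw [setLIntegral_const, volume_Ioc, sub_zero, ENNReal.ofReal_mul' hc]
    _ ≤ ∫⁻ t in Ioc 0 c, ENNReal.ofReal (1 - F (exp t) ^ N) := by
        refine setLIntegral_mono' measurableSet_Ioc fun t ht => ?_
        have hFt : F (exp t) ≤ exp (-u) :=
          (hFmono (exp_le_exp.2 ht.2)).trans (hu.trans (by linarith [add_one_le_exp (-u)]))
        have : F (exp t) ^ N ≤ exp (-(N * u)) := by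
          rw [neg_mul_eq_mul_neg, exp_nat_mul]
          exact pow_le_pow_left₀ (hF0 _) hFt N
        gcongr
    _ ≤ ∫⁻ t in Ioi 0, ENNReal.ofReal (1 - F (exp t) ^ N) :=
        lintegral_mono_set Ioc_subset_Ioi_self

lemma tendsto_inv_mul_log_mul_natCast_atTop (hξ : 0 < ξ) (hγ : 0 < γ) :
    Tendsto (fun N : ℕ => (1 / γ) * log (ξ * N)) atTop atTop :=
  (tendsto_log_atTop.comp (tendsto_natCast_atTop_atTop.const_mul_atTop hξ)).const_mul_atTop
    (by positivity)

lemma natCast_mul_mul_exp_neg_mul_log {N : ℕ} (hξN : 0 < ξ * N) (hγ : γ ≠ 0) (s : ℝ) :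
    N * ξ * exp (-γ * (s * ((1 / γ) * log (ξ * N)))) = (ξ * N) ^ (1 - s) := by
  have : -γ * (s * ((1 / γ) * log (ξ * N))) = log (ξ * N) * (1 - s) - log (ξ * N) := by
    field_simp
    ring
  rw [this, exp_sub, exp_log hξN, ← rpow_def_of_pos hξN, mul_comm (N : ℝ) ξ]
  exact mul_div_cancel₀ _ hξN.ne'

lemma eventually_lintegral_one_sub_pow_div_lt (hξ : 0 < ξ) (hγ : 0 < γ)
    (htail : Tendsto (fun t => (1 - F (exp t)) / (ξ * exp (-γ * t))) atTop (𝓝 1))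
    (hF0 : ∀ x, 0 ≤ F x) {b : ℝ} (hb : 1 < b) :
    ∀ᶠ N : ℕ in atTop,
      (∫⁻ t in Ioi 0, ENNReal.ofReal (1 - F (exp t) ^ N)).toReal /
        ((1 / γ) * log (ξ * N)) < b := by
  set ε := (b - 1) / 2 with hε_def
  have hε : 0 < ε := by linarith
  obtain ⟨t₀, ht₀⟩ := eventually_atTop.1 (eventually_le_mul_of_tendsto_div htail
    (.of_forall fun t => by positivity) (by linarith : 1 < 1 + ε))
  have hL := tendsto_inv_mul_log_mul_natCast_atTop hξ hγ
  have hrem : Tendsto (fun N : ℕ => (1 + ε) / γ * (ξ * N) ^ (-ε) / ((1 / γ) * log (ξ * N)))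
      atTop (𝓝 0) := by
    have := ((tendsto_rpow_neg_atTop hε).comp
      (tendsto_natCast_atTop_atTop.const_mul_atTop hξ)).const_mul ((1 + ε) / γ)
    have h0 : Tendsto (fun N : ℕ => (1 + ε) / γ * (ξ * N) ^ (-ε)) atTop (𝓝 0) := by
      simpa using this
    exact h0.div_atTop hL
  filter_upwards [(hL.const_mul_atTop (by linarith : 0 < 1 + ε)).eventually_ge_atTop (max t₀ 0),
    hL.eventually_gt_atTop 0, eventually_ge_atTop 1,
    hrem.eventually (gt_mem_nhds (by linarith : 0 < b - (1 + ε)))] with N hc hL0 hN hrN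
  set L := (1 / γ) * log (ξ * N)
  have hξN : 0 < ξ * N := mul_pos hξ (by exact_mod_cast hN)
  have hI := lintegral_one_sub_pow_le hF0 (by positivity : 0 ≤ (1 + ε) * ξ) hγ
    ((le_max_right _ _).trans hc)
    (fun t ht => by nlinarith [ht₀ t ((le_max_left _ _).trans (hc.trans ht.le))]) N
  have hscale : N * ((1 + ε) * ξ) * exp (-γ * ((1 + ε) * L)) / γ =
      (1 + ε) / γ * (ξ * N) ^ (-ε) := by
    rw [show (N : ℝ) * ((1 + ε) * ξ) = (1 + ε) * (N * ξ) by ring, mul_assoc,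
      natCast_mul_mul_exp_neg_mul_log hξN hγ.ne', show 1 - (1 + ε) = -ε by ring]
    ring
  rw [hscale] at hI
  have hIL := ENNReal.toReal_le_of_le_ofReal (by positivity) hI
  rw [div_lt_iff₀ hL0] at hrN
  rw [div_lt_iff₀ hL0]
  nlinarith

lemma eventually_lt_lintegral_one_sub_pow_div (hξ : 0 < ξ) (hγ : 0 < γ)
    (htail : Tendsto (fun t => (1 - F (exp t)) / (ξ * exp (-γ * t))) atTop (𝓝 1))
    (hF0 : ∀ x, 0 ≤ F x) (hFmono : Monotone F) {a : ℝ} (ha : a < 1) :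
    ∀ᶠ N : ℕ in atTop,
      a < (∫⁻ t in Ioi 0, ENNReal.ofReal (1 - F (exp t) ^ N)).toReal /
        ((1 / γ) * log (ξ * N)) := by
  set ε := (1 - max a 0) / 2 with hε_def
  have hmax : max a 0 < 1 := max_lt ha zero_lt_one
  have hε : 0 < ε := by linarith
  have hε1 : 0 < 1 - ε := by linarith [le_max_right a 0]
  have haε : a < 1 - ε := by linarith [le_max_left a 0]
  have hpos : ∀ᶠ t in atTop, 0 < ξ * exp (-γ * t) := .of_forall fun t => by positivity
  obtain ⟨t₀, ht₀⟩ := eventually_atTop.1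
    (eventually_mul_le_of_tendsto_div htail hpos (by linarith : 1 - ε < 1))
  obtain ⟨t₁, ht₁⟩ := eventually_atTop.1
    (eventually_le_mul_of_tendsto_div htail hpos one_lt_two)
  have hL := tendsto_inv_mul_log_mul_natCast_atTop hξ hγ
  have hV : Tendsto (fun N : ℕ => (1 - exp (-((1 - ε) * (ξ * N) ^ ε))) * (1 - ε))
      atTop (𝓝 (1 - ε)) := by
    have := tendsto_exp_atBot.comp (tendsto_neg_atTop_atBot.comp
      (((tendsto_rpow_atTop hε).comp
        (tendsto_natCast_atTop_atTop.const_mul_atTop hξ)).const_mul_atTop hε1))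
    simpa using (this.const_sub 1).mul_const (1 - ε)
  filter_upwards [(hL.const_mul_atTop hε1).eventually_ge_atTop (max t₀ 0),
    hL.eventually_gt_atTop 0, eventually_ge_atTop 1, hV.eventually (lt_mem_nhds haε)]
    with N hc hL0 hN hVN
  set L := (1 / γ) * log (ξ * N)
  have hξN : 0 < ξ * N := mul_pos hξ (by exact_mod_cast hN)
  have hfin : ∫⁻ t in Ioi 0, ENNReal.ofReal (1 - F (exp t) ^ N) ≠ ⊤ :=
    ((lintegral_one_sub_pow_le hF0 (by positivity : 0 ≤ 2 * ξ) hγ (le_max_right t₁ 0)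
      (fun t ht => by nlinarith [ht₁ t ((le_max_left _ _).trans ht.le)]) N).trans_lt
      ENNReal.ofReal_lt_top).ne
  have hu : F (exp ((1 - ε) * L)) ≤ 1 - (1 - ε) * ξ * exp (-γ * ((1 - ε) * L)) := by
    nlinarith [ht₀ _ ((le_max_left _ _).trans hc)]
  have hI := ofReal_mul_le_lintegral_one_sub_pow hF0 hFmono ((le_max_right _ _).trans hc) hu N
  have hscale : N * ((1 - ε) * ξ * exp (-γ * ((1 - ε) * L))) = (1 - ε) * (ξ * N) ^ ε := by
    rw [show (N : ℝ) * ((1 - ε) * ξ * exp (-γ * ((1 - ε) * L))) =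
        (1 - ε) * (N * ξ * exp (-γ * ((1 - ε) * L))) by ring,
      natCast_mul_mul_exp_neg_mul_log hξN hγ.ne', sub_sub_cancel]
  rw [hscale] at hI
  have hIL := (ENNReal.ofReal_le_iff_le_toReal hfin).1 hI
  rw [lt_div_iff₀ hL0]
  nlinarith

theorem tendsto_lintegral_one_sub_pow_div (hξ : 0 < ξ) (hγ : 0 < γ)
    (htail : Tendsto (fun t => (1 - F (exp t)) / (ξ * exp (-γ * t))) atTop (𝓝 1))
    (hF0 : ∀ x, 0 ≤ F x) (hFmono : Monotone F) :
    Tendsto (fun N : ℕ =>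
      (∫⁻ t in Ioi 0, ENNReal.ofReal (1 - F (exp t) ^ N)).toReal / ((1 / γ) * log (ξ * N)))
      atTop (𝓝 1) :=
  tendsto_order.2
    ⟨fun _ ha => eventually_lt_lintegral_one_sub_pow_div hξ hγ htail hF0 hFmono ha,
      fun _ hb => eventually_lintegral_one_sub_pow_div_lt hξ hγ htail hF0 hb⟩

end TailIntegral

theorem truncated_log_max_scaling_pareto_general
    {Ω : Type*} [MeasurableSpace Ω] (μ : Measure Ω) [IsProbabilityMeasure μ]
    (X : ℕ → Ω → ℝ) (hmeas : ∀ i, Measurable (X i))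
    (hindep : iIndepFun X μ)
    (F : ℝ → ℝ) (hcdf : ∀ i x, (μ {ω | X i ω ≤ x}).toReal = F x)
    (ξ γ : ℝ) (hξ : 0 < ξ) (hγ : 0 < γ)
    (htail : Tendsto (fun x => (1 - F x) / (ξ * x ^ (-γ))) atTop (𝓝 1)) :
    Tendsto (fun N : ℕ =>
      (∫ ω, (if 1 ≤ maxOver X N ω then Real.log (maxOver X N ω) else 0) ∂μ) /
        ((1 / γ) * Real.log (ξ * N)))
      atTop (𝓝 1) := by
  have hF0 : ∀ x, 0 ≤ F x := fun x => hcdf 0 x ▸ ENNReal.toReal_nonneg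
  have hFmono : Monotone F := fun x y hxy => by
    rw [← hcdf 0 x, ← hcdf 0 y]
    exact ENNReal.toReal_mono (measure_ne_top μ _) (measure_mono fun ω h => le_trans h hxy)
  have hcdf' : ∀ i x, μ {ω | X i ω ≤ x} = ENNReal.ofReal (F x) := fun i x => by
    rw [← hcdf i x, ENNReal.ofReal_toReal (measure_ne_top μ _)]
  have htail' : Tendsto (fun t => (1 - F (exp t)) / (ξ * exp (-γ * t))) atTop (𝓝 1) := by
    simpa only [Function.comp_def, ← exp_mul, mul_comm _ (-γ)] using htail.comp tendsto_exp_atTop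
  refine (tendsto_lintegral_one_sub_pow_div hξ hγ htail' hF0 hFmono).congr' ?_
  filter_upwards [eventually_ge_atTop 1] with N hN
  rw [integral_ite_log_eq_lintegral_measure_lt (measurable_maxOver hmeas hN)]
  congr 2
  refine setLIntegral_congr_fun measurableSet_Ioi fun t _ => ?_
  rw [measure_lt_maxOver hmeas hindep hcdf' hN, ← ENNReal.ofReal_pow (hF0 _),
    ← ENNReal.ofReal_one, ← ENNReal.ofReal_sub _ (pow_nonneg (hF0 _) N)]

/-- For i.i.d. nonnegative `X i` with Pareto-type tail `1 - F_X(x) ~ ξ x^(-γ)`,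
the truncated expected log of the maximum satisfies
`E[log(X*_N) 1{X*_N ≥ 1}] / ((1/γ) log(ξ N)) → 1`. -/
theorem truncated_log_max_scaling_pareto
    {Ω : Type*} [MeasurableSpace Ω] (μ : Measure Ω) [IsProbabilityMeasure μ]
    (X : ℕ → Ω → ℝ) (hmeas : ∀ i, Measurable (X i)) (hnn : ∀ i ω, 0 ≤ X i ω)
    (hindep : iIndepFun X μ)
    (F : ℝ → ℝ) (hcdf : ∀ i x, (μ {ω | X i ω ≤ x}).toReal = F x)
    (ξ γ : ℝ) (hξ : 0 < ξ) (hγ : 0 < γ)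
    (htail : Tendsto (fun x => (1 - F x) / (ξ * x ^ (-γ))) atTop (𝓝 1)) :
    Tendsto (fun N : ℕ =>
      (∫ ω, (if 1 ≤ maxOver X N ω then Real.log (maxOver X N ω) else 0) ∂μ) /
        ((1 / γ) * Real.log (ξ * N)))
      atTop (𝓝 1) :=
  truncated_log_max_scaling_pareto_general μ X hmeas hindep F hcdf ξ γ hξ hγ htail
end
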